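/- arXiv:1805.12459 — 3 statements merged into one kernel-verified Lean document; each statement's English description precedes it below -/
import Mathlib

section
/- For 0 ≤ ρ < 1 and r > 0 and u ≥ 0, the compound geometric tail with Erlang summands satisfies the identity (1 − ρ) Σ_{n=1}^∞ ρ^n ∫_u^∞ t^{n−1} e^{−t/r} / ((n−1)! r^n) dt = ρ e^{−u(1−ρ)/r}. -/
/-!
Write `f n t = tⁿ e^{-t/r} / (n! rⁿ⁺¹)` for the Erlang density. Summing under the integral sign
(legitimate because `∫ f n ≤ 1` and `ρ < 1`), the exponential series gives
`∑ ρⁿ⁺¹ f n t = (ρ/r) e^{-(1-ρ)t/r}`, whose integral over `(u, ∞)` is `ρ/(1-ρ) e^{-(1-ρ)u/r}`.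
-/

open MeasureTheory Set Real
open scoped Nat

-- Erlang density of shape `n + 1` and scale `r`.
noncomputable def erlangDensity (r : ℝ) (n : ℕ) (t : ℝ) : ℝ :=
  t ^ n * exp (-t / r) / (n ! * r ^ (n + 1))

section Erlang

variable {r : ℝ}

theorem integral_pow_mul_exp_neg_div_Ioi_zero (hr : 0 < r) (n : ℕ) :
    ∫ t in Ioi 0, t ^ n * exp (-t / r) = n ! * r ^ (n + 1) := by
  have h := integral_rpow_mul_exp_neg_mul_Ioi (a := n + 1) (by positivity) (inv_pos.2 hr)
  rw [one_div, inv_inv, Gamma_nat_eq_factorial, add_sub_cancel_right, ← Nat.cast_succ,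
    rpow_natCast] at h
  simp_rw [rpow_natCast, neg_div, div_eq_inv_mul] at h ⊢
  rw [h, mul_comm]

theorem integrableOn_pow_mul_exp_neg_div_Ioi_zero (hr : 0 < r) (n : ℕ) :
    IntegrableOn (fun t ↦ t ^ n * exp (-t / r)) (Ioi 0) :=
  -- a non-integrable function has Bochner integral `0`
  Integrable.of_integral_ne_zero <| by
    rw [integral_pow_mul_exp_neg_div_Ioi_zero hr n]
    positivity

theorem erlangDensity_nonneg (hr : 0 ≤ r) (n : ℕ) {t : ℝ} (ht : 0 ≤ t) :
    0 ≤ erlangDensity r n t := by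
  unfold erlangDensity
  positivity

theorem integrableOn_erlangDensity_Ioi (hr : 0 < r) (n : ℕ) {u : ℝ} (hu : 0 ≤ u) :
    IntegrableOn (erlangDensity r n) (Ioi u) :=
  IntegrableOn.mono_set ((integrableOn_pow_mul_exp_neg_div_Ioi_zero hr n).div_const _)
    (Ioi_subset_Ioi hu)

theorem integral_erlangDensity_Ioi_zero (hr : 0 < r) (n : ℕ) :
    ∫ t in Ioi 0, erlangDensity r n t = 1 := by
  unfold erlangDensity
  rw [integral_div, integral_pow_mul_exp_neg_div_Ioi_zero hr n, div_self (by positivity)]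

theorem integral_erlangDensity_Ioi_le_one (hr : 0 < r) (n : ℕ) {u : ℝ} (hu : 0 ≤ u) :
    ∫ t in Ioi u, erlangDensity r n t ≤ 1 :=
  integral_erlangDensity_Ioi_zero hr n ▸
    setIntegral_mono_set (integrableOn_erlangDensity_Ioi hr n le_rfl)
      ((ae_restrict_mem measurableSet_Ioi).mono fun _ ht ↦ erlangDensity_nonneg hr.le n ht.le)
      (Ioi_subset_Ioi hu).eventuallyLE

theorem hasSum_pow_succ_mul_erlangDensity (hr : r ≠ 0) (ρ t : ℝ) :
    HasSum (fun n ↦ ρ ^ (n + 1) * erlangDensity r n t) (ρ / r * exp ((ρ - 1) / r * t)) := by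
  have h := (NormedSpace.expSeries_div_hasSum_exp (ρ * t / r)).mul_left (ρ / r * exp (-t / r))
  rw [← Real.exp_eq_exp_ℝ, mul_assoc, ← exp_add] at h
  have h_term : (fun n ↦ ρ ^ (n + 1) * erlangDensity r n t)
      = fun n ↦ ρ / r * exp (-t / r) * ((ρ * t / r) ^ n / n !) := by
    funext n
    unfold erlangDensity
    rw [div_pow, mul_pow]
    field_simp
    ring
  rwa [h_term, show (ρ - 1) / r * t = -t / r + ρ * t / r by ring]

end Erlang

theorem tsum_pow_succ_mul_integral_erlangDensity_Ioi {ρ r u : ℝ} (hρ0 : 0 ≤ ρ) (hρ1 : ρ < 1)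
    (hr : 0 < r) (hu : 0 ≤ u) :
    ∑' n : ℕ, ρ ^ (n + 1) * ∫ t in Ioi u, erlangDensity r n t
      = ρ / (1 - ρ) * exp ((ρ - 1) / r * u) := by
  have h_int (n : ℕ) : IntegrableOn (fun t ↦ ρ ^ (n + 1) * erlangDensity r n t) (Ioi u) :=
    (integrableOn_erlangDensity_Ioi hr n hu).const_mul _
  have h_norm (n : ℕ) : ∫ t in Ioi u, ‖ρ ^ (n + 1) * erlangDensity r n t‖
      = ρ ^ (n + 1) * ∫ t in Ioi u, erlangDensity r n t := by
    rw [← integral_const_mul]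
    refine setIntegral_congr_fun measurableSet_Ioi fun t ht ↦ norm_of_nonneg ?_
    exact mul_nonneg (by positivity) (erlangDensity_nonneg hr.le n (hu.trans ht.le))
  have h_summable : Summable fun n ↦ ∫ t in Ioi u, ‖ρ ^ (n + 1) * erlangDensity r n t‖ := by
    refine ((summable_geometric_of_lt_one hρ0 hρ1).mul_left ρ).of_nonneg_of_le
      (fun n ↦ integral_nonneg fun _ ↦ norm_nonneg _) fun n ↦ ?_
    rw [h_norm, pow_succ']
    exact mul_le_of_le_one_right (by positivity) (integral_erlangDensity_Ioi_le_one hr n hu)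
  calc ∑' n : ℕ, ρ ^ (n + 1) * ∫ t in Ioi u, erlangDensity r n t
      = ∑' n : ℕ, ∫ t in Ioi u, ρ ^ (n + 1) * erlangDensity r n t := by
        simp_rw [integral_const_mul]
    _ = ∫ t in Ioi u, ρ / r * exp ((ρ - 1) / r * t) := by
        rw [integral_tsum_of_summable_integral_norm h_int h_summable]
        simp_rw [(hasSum_pow_succ_mul_erlangDensity hr.ne' ρ _).tsum_eq]
    _ = ρ / (1 - ρ) * exp ((ρ - 1) / r * u) := by
        have hρ : 1 - ρ ≠ 0 := by linarith
        rw [integral_const_mul, integral_exp_mul_Ioi (div_neg_of_neg_of_pos (by linarith) hr),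
          show ρ - 1 = -(1 - ρ) by ring]
        field_simp

theorem stmt_8 (ρ r u : ℝ) (hρ0 : 0 ≤ ρ) (hρ1 : ρ < 1) (hr : 0 < r) (hu : 0 ≤ u) :
    (1 - ρ) * (∑' n : ℕ,
        ρ ^ (n + 1) *
          ∫ t in Set.Ioi u, t ^ n * Real.exp (-t/r) / (n.factorial * r ^ (n + 1)))
      = ρ * Real.exp (-u * (1 - ρ) / r) := by
  calc (1 - ρ) * (∑' n : ℕ, ρ ^ (n + 1) * ∫ t in Ioi u, erlangDensity r n t)
      = (1 - ρ) * (ρ / (1 - ρ) * exp ((ρ - 1) / r * u)) := by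
        rw [tsum_pow_succ_mul_integral_erlangDensity_Ioi hρ0 hρ1 hr hu]
    _ = ρ * exp (-u * (1 - ρ) / r) := by
        rw [← mul_assoc, mul_div_cancel₀ ρ (by linarith),
          show (ρ - 1) / r * u = -u * (1 - ρ) / r by ring]
end

section
/- In the exponential system the integrated tail distribution of a group Q is exactly exponential: if F_j(x) = 1 − e^{−x/μ_j} and the weights are W^i_j = 1{Q∼j} r^Q / (Σ_{k∈Q} 1{k∼j} μ_j), then F^Q_I(x) = (Σ_j (Σ_{i∈Q} A^i_j) λ μ_j)^{−1} Σ_j λ 1{Q∼j} ∫_0^x \bar F_j(y / Σ_{i∈Q} A^i_j) dy = 1 − e^{−x/r^Q} for all x ≥ 0, provided deg(Q) > 0. -/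
/-!
Every resource `j` adjacent to `Q` carries total load `∑_{i∈Q} A^i_j = r^Q / μ_j`, because the
`#{k ∈ Q : k ∼ j}` equal weights cancel the count in their denominator. Rescaling time by this load
turns `F̄_j` into `e^{-y/r^Q}` for every such `j`, so each adjacent resource contributes the same
`λ r^Q (1 - e^{-x/r^Q})` to the numerator and `λ r^Q` to the normalisation; `deg(Q) > 0` makes the
common factor, the number of resources adjacent to `Q`, nonzero.
-/

open Finset MeasureTheory Classical

theorem integral_exp_neg_div (c x : ℝ) (hc : c ≠ 0) :
    ∫ y in (0:ℝ)..x, Real.exp (-(y / c)) = c * (1 - Real.exp (-x / c)) := by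
  rw [intervalIntegral.integral_comp_div (fun t => Real.exp (-t)) hc,
    intervalIntegral.integral_comp_neg (fun t => Real.exp t), integral_exp]
  simp [neg_div]

theorem sum_boole_mul_div_sum_boole {ι : Type*} (s : Finset ι) (p : ι → Prop) [DecidablePred p]
    (a b : ℝ) :
    ∑ i ∈ s, (if p i then (1 : ℝ) else 0) * (a / ((∑ k ∈ s, if p k then (1 : ℝ) else 0) * b)) =
      if ∃ i ∈ s, p i then a / b else 0 := by
  rw [← sum_mul, sum_boole]
  split_ifs with h
  · obtain ⟨i, hi, hpi⟩ := h
    have hcard : ((s.filter p).card : ℝ) ≠ 0 :=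
      Nat.cast_ne_zero.mpr (card_ne_zero_of_mem (mem_filter.mpr ⟨hi, hpi⟩))
    rw [mul_div_assoc', mul_div_mul_left _ _ hcard]
  · push Not at h
    simp [filter_false_of_mem h]

theorem stmt_9 (q d : ℕ) (e : Fin q → Fin d → Bool) (Q : Finset (Fin q))
    (lam rQ : ℝ) (hlam : 0 < lam) (hrQ : 0 < rQ)
    (mu : Fin d → ℝ) (hmu : ∀ j, 0 < mu j)
    (hdeg : ∃ i ∈ Q, ∃ j, e i j = true)
    (ind : Fin d → ℝ)
    (hind : ∀ j, ind j = if (∃ i ∈ Q, e i j = true) then 1 else 0)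
    (A : Fin q → Fin d → ℝ)
    (hA : ∀ i j, A i j = (if e i j = true then (1:ℝ) else 0) *
        (ind j * rQ / ((∑ k ∈ Q, if e k j = true then (1:ℝ) else 0) * mu j))) :
    ∀ x : ℝ, 0 ≤ x →
      (∑ j, (∑ i ∈ Q, A i j) * (lam * mu j))⁻¹ *
        ∑ j, lam * ind j *
          ∫ y in (0:ℝ)..x, Real.exp (-(y / (∑ i ∈ Q, A i j)) / mu j)
      = 1 - Real.exp (-x / rQ) := by
  intro x _
  have hload : ∀ j, ∑ i ∈ Q, A i j = ind j * (rQ / mu j) := by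
    intro j
    simp only [hA]
    rw [sum_boole_mul_div_sum_boole, hind]
    split_ifs <;> ring
  have hden : ∀ j, (∑ i ∈ Q, A i j) * (lam * mu j) = ind j * (lam * rQ) := by
    intro j
    rw [hload]
    field_simp [(hmu j).ne']
  have hnum : ∀ j, lam * ind j * ∫ y in (0:ℝ)..x, Real.exp (-(y / (∑ i ∈ Q, A i j)) / mu j) =
      ind j * (lam * (rQ * (1 - Real.exp (-x / rQ)))) := by
    intro j
    rw [hload, hind]
    split_ifs
    · have hscale : ∀ y, -(y / (1 * (rQ / mu j))) / mu j = -(y / rQ) := fun y => by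
        field_simp [(hmu j).ne']
      simp_rw [hscale, integral_exp_neg_div rQ x hrQ.ne']
      ring
    · simp
  have hconn : 0 < ∑ j, ind j := by
    obtain ⟨i, hi, j, hij⟩ := hdeg
    refine sum_pos' (fun j _ => ?_) ⟨j, mem_univ j, ?_⟩
    · rw [hind]; split_ifs <;> norm_num
    · rw [hind, if_pos ⟨i, hi, hij⟩]; exact one_pos
  simp_rw [hden, hnum, ← sum_mul]
  field_simp [hconn.ne', hlam.ne', hrQ.ne']
end

section
/- In the Bernoulli network with deterministic weights W^i_j = 1/c_j for all agents, and P^Q = (1/deg(Q)) Σ_{i∈Q} Σ_{j=1}^d 1{i∼j} ρ_j (interpreted as 0 when deg(Q)=0), one has E[P^Q] = ((1 − (1−p)^{d|Q|})/d) Σ_{j=1}^d ρ_j, where all edge indicators are i.i.d. Bernoulli(p). Consequently E[P^Q] < 1 if and only if the average (1/d)Σ_j ρ_j < 1/(1 − (1−p)^{d|Q|}). -/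
/-!
Index the `n = d|Q|` possible edges of `Q` by `e`, write `X_e` for their indicators and
`T = ∑ X_e` for `deg(Q)`, so that `P^Q = ∑ ρ_e X_e / T`. The edges are exchangeable, so
`E[X_e / T]` does not depend on `e`; since `∑ X_e / T` is the indicator of `T ≠ 0`, that common
value is `P(T ≠ 0) / n = (1 - (1 - p)^n) / n`, and linearity gives the formula for `E[P^Q]`.
-/

open Finset MeasureTheory
open scoped NNReal

section BernoulliSums

variable {ι : Type*}

def trueCount (E : Finset ι) (ω : ι → Bool) : ℝ := ∑ e ∈ E, if ω e then 1 else 0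

theorem trueCount_comp_perm {E : Finset ι} {σ : Equiv.Perm ι} (hσ : ∀ i, i ∈ E ↔ σ i ∈ E)
    (ω : ι → Bool) : trueCount E (ω ∘ σ) = trueCount E ω :=
  Finset.sum_equiv σ hσ fun _ _ => rfl

theorem trueCount_eq_zero_iff (E : Finset ι) (ω : ι → Bool) :
    trueCount E ω = 0 ↔ ∀ e ∈ E, ω e = false := by
  rw [trueCount, Finset.sum_eq_zero_iff_of_nonneg fun e _ => by positivity]
  refine forall₂_congr fun e _ => ?_
  cases ω e <;> simp

variable [Fintype ι]

def bernoulliWeight (p : ℝ) (ω : ι → Bool) : ℝ := ∏ i, if ω i then p else 1 - p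

theorem sum_bernoulliWeight [DecidableEq ι] (p : ℝ) :
    ∑ ω : ι → Bool, bernoulliWeight p ω = 1 := by
  simp only [bernoulliWeight]
  rw [← Fintype.prod_sum fun (_ : ι) (b : Bool) => if b then p else 1 - p]
  simp

theorem sum_bernoulliWeight_allFalse [DecidableEq ι] (p : ℝ) (E : Finset ι) :
    ∑ ω ∈ Finset.univ.filter (fun ω : ι → Bool => ∀ e ∈ E, ω e = false), bernoulliWeight p ω
      = (1 - p) ^ E.card := by
  have hprod : ∀ ω : ι → Bool,
      (if ∀ e ∈ E, ω e = false then bernoulliWeight p ω else 0)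
        = ∏ i, if (i ∈ E → ω i = false) then (if ω i then p else 1 - p) else 0 := by
    intro ω
    simp only [Finset.prod_ite_zero, Finset.mem_univ, true_implies, bernoulliWeight]
  rw [Finset.sum_filter, Finset.sum_congr rfl fun ω _ => hprod ω,
    ← Fintype.prod_sum fun i b => if (i ∈ E → b = false) then (if b then p else 1 - p) else 0]
  have hfactor : ∀ i, (∑ b : Bool, if (i ∈ E → b = false) then (if b then p else 1 - p) else 0)
      = if i ∈ E then 1 - p else 1 := by
    intro i
    by_cases hi : i ∈ E <;> simp [hi]
  rw [Finset.prod_congr rfl fun i _ => hfactor i, Finset.prod_ite_mem, Finset.univ_inter,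
    Finset.prod_const]

theorem bernoulliWeight_comp_perm (p : ℝ) (σ : Equiv.Perm ι) (ω : ι → Bool) :
    bernoulliWeight p (ω ∘ σ) = bernoulliWeight p ω :=
  Equiv.prod_comp σ fun i => if ω i then p else 1 - p

theorem Equiv.Perm.sum_precomp {β M : Type*} [Fintype β] [AddCommMonoid M] [DecidableEq ι]
    (σ : Equiv.Perm ι) (F : (ι → β) → M) : ∑ ω, F (ω ∘ σ) = ∑ ω, F ω :=
  Equiv.sum_comp (σ.symm.arrowCongr (Equiv.refl β)) F

variable [DecidableEq ι] (p : ℝ) (E : Finset ι)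

theorem sum_sum_bernoulliWeight_mul_indicator_div_trueCount :
    ∑ e ∈ E, ∑ ω, bernoulliWeight p ω * ((if ω e then 1 else 0) / trueCount E ω)
      = 1 - (1 - p) ^ E.card := by
  have hω : ∀ ω : ι → Bool,
      ∑ e ∈ E, bernoulliWeight p ω * ((if ω e then 1 else 0) / trueCount E ω)
        = bernoulliWeight p ω - if ∀ e ∈ E, ω e = false then bernoulliWeight p ω else 0 := by
    intro ω
    rw [← Finset.mul_sum, ← Finset.sum_div, ← trueCount]
    split_ifs with h
    -- `x / 0 = 0` is exactly the convention `P^Q = 0` when `deg(Q) = 0`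
    · simp [(trueCount_eq_zero_iff E ω).mpr h]
    · rw [div_self (mt (trueCount_eq_zero_iff E ω).mp h), mul_one, sub_zero]
  rw [Finset.sum_comm, Finset.sum_congr rfl fun ω _ => hω ω, Finset.sum_sub_distrib,
    ← Finset.sum_filter, sum_bernoulliWeight, sum_bernoulliWeight_allFalse]

variable {E}

theorem sum_bernoulliWeight_mul_indicator_div_trueCount_eq {e₁ e₂ : ι} (h₁ : e₁ ∈ E)
    (h₂ : e₂ ∈ E) :
    ∑ ω, bernoulliWeight p ω * ((if ω e₁ then 1 else 0) / trueCount E ω)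
      = ∑ ω, bernoulliWeight p ω * ((if ω e₂ then 1 else 0) / trueCount E ω) := by
  have hswap : ∀ i, i ∈ E ↔ Equiv.swap e₁ e₂ i ∈ E := fun i => by
    rcases eq_or_ne i e₁ with rfl | hi₁
    · simp [h₁, h₂]
    rcases eq_or_ne i e₂ with rfl | hi₂
    · simp [h₁, h₂]
    · rw [Equiv.swap_apply_of_ne_of_ne hi₁ hi₂]
  rw [← Equiv.Perm.sum_precomp (Equiv.swap e₁ e₂)]
  refine Finset.sum_congr rfl fun ω _ => ?_
  rw [bernoulliWeight_comp_perm, trueCount_comp_perm hswap, Function.comp_apply,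
    Equiv.swap_apply_left]

theorem sum_bernoulliWeight_mul_indicator_div_trueCount {e : ι} (he : e ∈ E) :
    ∑ ω, bernoulliWeight p ω * ((if ω e then 1 else 0) / trueCount E ω)
      = (1 - (1 - p) ^ E.card) / E.card := by
  have hcard : (E.card : ℝ) ≠ 0 := Nat.cast_ne_zero.mpr (Finset.card_ne_zero_of_mem he)
  rw [eq_div_iff hcard, mul_comm, ← sum_sum_bernoulliWeight_mul_indicator_div_trueCount,
    Finset.sum_congr rfl fun e' he' =>
      sum_bernoulliWeight_mul_indicator_div_trueCount_eq p he' he,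
    Finset.sum_const, nsmul_eq_mul]

variable (E)

theorem sum_bernoulliWeight_mul_weightedCount_div_trueCount (r : ι → ℝ) :
    ∑ ω, bernoulliWeight p ω * ((∑ e ∈ E, if ω e then r e else 0) / trueCount E ω)
      = (1 - (1 - p) ^ E.card) / E.card * ∑ e ∈ E, r e := by
  have hsplit : ∀ ω : ι → Bool, (∑ e ∈ E, if ω e then r e else 0) / trueCount E ω
      = ∑ e ∈ E, r e * ((if ω e then 1 else 0) / trueCount E ω) := fun ω => by
    rw [Finset.sum_div]
    refine Finset.sum_congr rfl fun e _ => ?_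
    cases ω e <;> simp [div_eq_mul_inv]
  simp_rw [hsplit, Finset.mul_sum, mul_left_comm (bernoulliWeight p _)]
  rw [Finset.sum_comm]
  simp_rw [← Finset.mul_sum]
  rw [Finset.mul_sum]
  refine Finset.sum_congr rfl fun e he => ?_
  rw [sum_bernoulliWeight_mul_indicator_div_trueCount p he, mul_comm]

end BernoulliSums

theorem MeasureTheory.integral_pi_bernoulli {ι : Type*} [Fintype ι] [DecidableEq ι] (p : ℝ≥0)
    (hp : p ≤ 1) (f : (ι → Bool) → ℝ) :
    ∫ ω, f ω ∂(Measure.pi fun _ : ι => (PMF.bernoulli p hp).toMeasure)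
      = ∑ ω, bernoulliWeight p ω * f ω := by
  rw [integral_fintype Integrable.of_finite]
  refine Finset.sum_congr rfl fun ω _ => ?_
  rw [smul_eq_mul, Measure.real, ← Set.univ_pi_singleton ω, Measure.pi_pi, ENNReal.toReal_prod,
    bernoulliWeight]
  congr 1
  refine Finset.prod_congr rfl fun i _ => ?_
  rw [PMF.toMeasure_apply_singleton _ _ (measurableSet_singleton _), PMF.bernoulli_apply]
  cases ω i
  · rw [cond_false, ENNReal.coe_toReal, NNReal.coe_sub hp, NNReal.coe_one,
      if_neg Bool.false_ne_true]
  · rfl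

theorem stmt_16_general (q d : ℕ) (hd : 0 < d)
    (Q : Finset (Fin q)) (hQ : Q.Nonempty)
    (rho : Fin d → ℝ)
    (p : ℝ) (hp0 : 0 < p) (hp1 : p ≤ 1)
    (hple : ENNReal.ofReal p ≤ 1)
    (μ : Measure (Fin q × Fin d → Bool))
    (hμ : μ = Measure.pi (fun _ : Fin q × Fin d =>
        (PMF.bernoulli (Real.toNNReal p) (ENNReal.coe_le_one_iff.mp hple)).toMeasure))
    (deg : (Fin q × Fin d → Bool) → ℝ)
    (hdeg : ∀ ω, deg ω = ∑ i ∈ Q, ∑ j, (if ω (i, j) then (1:ℝ) else 0))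
    (P : (Fin q × Fin d → Bool) → ℝ)
    (hP : ∀ ω, P ω = (∑ i ∈ Q, ∑ j, (if ω (i, j) then rho j else 0)) / deg ω) :
    (∫ ω, P ω ∂μ) = ((1 - (1 - p) ^ (d * Q.card)) / d) * ∑ j, rho j
    ∧ ((∫ ω, P ω ∂μ) < 1 ↔
        (1 / (d : ℝ)) * ∑ j, rho j < 1 / (1 - (1 - p) ^ (d * Q.card))) := by
  set E := Q ×ˢ (univ : Finset (Fin d))
  have hPE : ∀ ω, P ω = (∑ e ∈ E, if ω e then rho e.2 else 0) / trueCount E ω := fun ω => by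
    rw [hP, hdeg, trueCount, sum_product, sum_product]
  have hsum : ∑ e ∈ E, rho e.2 = Q.card * ∑ j, rho j := by
    simp [E, sum_product]
  have hQcard : (0 : ℝ) < Q.card := Nat.cast_pos.mpr hQ.card_pos
  have hmean : ∫ ω, P ω ∂μ = ((1 - (1 - p) ^ (d * Q.card)) / d) * ∑ j, rho j := by
    rw [hμ, integral_pi_bernoulli, Real.coe_toNNReal p hp0.le]
    simp_rw [hPE, sum_bernoulliWeight_mul_weightedCount_div_trueCount, hsum, E, card_product,
      card_univ, Fintype.card_fin, mul_comm Q.card d]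
    field_simp
    push_cast
    ring
  have hc : 0 < 1 - (1 - p) ^ (d * Q.card) :=
    sub_pos.mpr (pow_lt_one₀ (by linarith) (by linarith) (by positivity))
  refine ⟨hmean, ?_⟩
  rw [hmean, div_mul_eq_mul_div, div_lt_one (by positivity), one_div_mul_eq_div,
    div_lt_div_iff₀ (by positivity) hc, one_mul, mul_comm]

theorem stmt_16 (q d : ℕ) (hd : 0 < d)
    (Q : Finset (Fin q)) (hQ : Q.Nonempty)
    (rho : Fin d → ℝ) (hrho : ∀ j, 0 < rho j)
    (p : ℝ) (hp0 : 0 < p) (hp1 : p ≤ 1)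
    (hple : ENNReal.ofReal p ≤ 1)
    (μ : Measure (Fin q × Fin d → Bool))
    (hμ : μ = Measure.pi (fun _ : Fin q × Fin d =>
        (PMF.bernoulli (Real.toNNReal p) (ENNReal.coe_le_one_iff.mp hple)).toMeasure))
    (deg : (Fin q × Fin d → Bool) → ℝ)
    (hdeg : ∀ ω, deg ω = ∑ i ∈ Q, ∑ j, (if ω (i, j) then (1:ℝ) else 0))
    (P : (Fin q × Fin d → Bool) → ℝ)
    (hP : ∀ ω, P ω = (∑ i ∈ Q, ∑ j, (if ω (i, j) then rho j else 0)) / deg ω) :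
    (∫ ω, P ω ∂μ) = ((1 - (1 - p) ^ (d * Q.card)) / d) * ∑ j, rho j
    ∧ ((∫ ω, P ω ∂μ) < 1 ↔
        (1 / (d : ℝ)) * ∑ j, rho j < 1 / (1 - (1 - p) ^ (d * Q.card))) :=
  stmt_16_general q d hd Q hQ rho p hp0 hp1 hple μ hμ deg hdeg P hP
end
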